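/- The G-transform of a Γ(m,1)-distributed random variable is stochastically less than a standard Gaussian: for all real w, P(Z ≤ w) ≤ P(G(T) ≤ w), where Z is standard Gaussian and T ~ Γ(m,1). -/

import Mathlib

/-!
`signedRoot m` is the transform `G`. Put `D(s) = P(T ≤ s) - Φ(G(s))` for `s > 0`. The logarithm
of the Γ(m,1) density is `-G(s)²/2 - log s` plus a constant, so `s·g(s) = c·φ(G(s))` and, away
from `s = m`, `D'(s) = φ(G(s))/s · (c - √R(s))` with `R(s) = (s - m)²/G(s)²`. This ratio lies
between `s` and `m`, which makes `R' = 2(s - m)(s - R)/(s·G²)` nonnegative on either side of `m`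
and `R ≤ m ≤ R` across it, so `R` is nondecreasing and `D'` changes sign at most once, from `+` to
`-`. As `D` tends to `0` at both ends of `(0, ∞)`, it is nonnegative; `G` being an increasing
bijection `(0, ∞) → ℝ` turns `D ≥ 0` into the claim.
-/

open MeasureTheory ProbabilityTheory Real Set Filter Topology
open scoped NNReal

section Calculus

variable {D : Set ℝ} {f f' : ℝ → ℝ} {c : ℝ}

theorem monotoneOn_of_hasDerivAt_nonneg (hD : Convex ℝ D)
    (hf' : ∀ x ∈ D, HasDerivAt f (f' x) x) (hf'₀ : ∀ x ∈ D, 0 ≤ f' x) :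
    MonotoneOn f D :=
  monotoneOn_of_hasDerivWithinAt_nonneg hD
    (fun x hx => (hf' x hx).continuousAt.continuousWithinAt)
    (fun x hx => (hf' x (interior_subset hx)).hasDerivWithinAt)
    (fun x hx => hf'₀ x (interior_subset hx))

theorem antitoneOn_of_hasDerivAt_nonpos (hD : Convex ℝ D)
    (hf' : ∀ x ∈ D, HasDerivAt f (f' x) x) (hf'₀ : ∀ x ∈ D, f' x ≤ 0) :
    AntitoneOn f D :=
  antitoneOn_of_hasDerivWithinAt_nonpos hD
    (fun x hx => (hf' x hx).continuousAt.continuousWithinAt)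
    (fun x hx => (hf' x (interior_subset hx)).hasDerivWithinAt)
    (fun x hx => hf'₀ x (interior_subset hx))

theorem monotoneOn_of_hasDerivAt_nonneg_of_ne (hD : Convex ℝ D) (hf : ContinuousOn f D)
    (hf' : ∀ x ∈ interior D, x ≠ c → HasDerivAt f (f' x) x)
    (hf'₀ : ∀ x ∈ interior D, x ≠ c → 0 ≤ f' x) : MonotoneOn f D := by
  have avoiding : ∀ x ∈ D, ∀ y ∈ D, x ≤ y → c ∉ Ioo x y → f x ≤ f y := by
    intro x hx y hy hxy hc
    have hsub : Icc x y ⊆ D := hD.ordConnected.out hx hy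
    have hint : interior (Icc x y) ⊆ interior D := interior_mono hsub
    refine monotoneOn_of_hasDerivWithinAt_nonneg (convex_Icc x y) (hf.mono hsub)
      (fun z hz => (hf' z (hint hz) ?_).hasDerivWithinAt) (fun z hz => hf'₀ z (hint hz) ?_)
      (left_mem_Icc.2 hxy) (right_mem_Icc.2 hxy) hxy <;>
    · rw [interior_Icc] at hz
      exact ne_of_mem_of_not_mem hz hc
  intro x hx y hy hxy
  by_cases hc : c ∈ Ioo x y
  · have hcD : c ∈ D := hD.ordConnected.out hx hy (Ioo_subset_Icc_self hc)
    exact (avoiding x hx c hcD hc.1.le fun h => h.2.false).trans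
      (avoiding c hcD y hy hc.2.le fun h => h.1.false)
  · exact avoiding x hx y hy hxy hc

theorem antitoneOn_of_hasDerivAt_nonpos_of_ne (hD : Convex ℝ D) (hf : ContinuousOn f D)
    (hf' : ∀ x ∈ interior D, x ≠ c → HasDerivAt f (f' x) x)
    (hf'₀ : ∀ x ∈ interior D, x ≠ c → f' x ≤ 0) : AntitoneOn f D := by
  have := monotoneOn_of_hasDerivAt_nonneg_of_ne (f := -f) (f' := -f') hD hf.neg
    (fun x hx hxc => (hf' x hx hxc).neg) (fun x hx hxc => neg_nonneg.2 (hf'₀ x hx hxc))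
  exact fun x hx y hy hxy => neg_le_neg_iff.1 (this hx hy hxy)

theorem strictMonoOn_of_hasDerivAt_pos_of_ne (hD : Convex ℝ D) (hf : ContinuousOn f D)
    (hf' : ∀ x ∈ interior D, x ≠ c → HasDerivAt f (f' x) x)
    (hf'₀ : ∀ x ∈ interior D, x ≠ c → 0 < f' x) : StrictMonoOn f D := by
  have avoiding : ∀ x ∈ D, ∀ y ∈ D, x < y → c ∉ Ioo x y → f x < f y := by
    intro x hx y hy hxy hc
    have hsub : Icc x y ⊆ D := hD.ordConnected.out hx hy
    have hint : interior (Icc x y) ⊆ interior D := interior_mono hsub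
    refine strictMonoOn_of_hasDerivWithinAt_pos (convex_Icc x y) (hf.mono hsub)
      (fun z hz => (hf' z (hint hz) ?_).hasDerivWithinAt) (fun z hz => hf'₀ z (hint hz) ?_)
      (left_mem_Icc.2 hxy.le) (right_mem_Icc.2 hxy.le) hxy <;>
    · rw [interior_Icc] at hz
      exact ne_of_mem_of_not_mem hz hc
  intro x hx y hy hxy
  by_cases hc : c ∈ Ioo x y
  · have hcD : c ∈ D := hD.ordConnected.out hx hy (Ioo_subset_Icc_self hc)
    exact (avoiding x hx c hcD hc.1 fun h => h.2.false).trans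
      (avoiding c hcD y hy hc.2 fun h => h.1.false)
  · exact avoiding x hx y hy hxy hc

theorem nonneg_of_monotoneOn_or_antitoneOn {a p : ℝ} (hap : a < p)
    (h₀ : Tendsto f (𝓝[>] a) (𝓝 0)) (h₁ : Tendsto f atTop (𝓝 0))
    (h : MonotoneOn f (Ioc a p) ∨ AntitoneOn f (Ici p)) : 0 ≤ f p := by
  rcases h with hmono | hanti
  · refine le_of_tendsto h₀ ?_
    filter_upwards [Ioo_mem_nhdsGT hap] with x hx
    exact hmono (Ioo_subset_Ioc_self hx) (right_mem_Ioc.2 hap) hx.2.le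
  · refine le_of_tendsto h₁ ?_
    filter_upwards [eventually_ge_atTop p] with x hx
    exact hanti self_mem_Ici hx hx

theorem hasDerivAt_integral_Iic (hf : Integrable f) {x : ℝ} (hx : ContinuousAt f x) :
    HasDerivAt (fun w => ∫ t in Iic w, f t) (f x) x := by
  have split : (fun w => ∫ t in Iic w, f t) =
      fun w => (∫ t in Iic 0, f t) + ∫ t in (0)..w, f t := by
    funext w
    rw [← intervalIntegral.integral_Iic_sub_Iic hf.integrableOn hf.integrableOn]
    ring
  rw [split]
  exact (intervalIntegral.integral_hasDerivAt_right hf.intervalIntegrable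
    hf.aestronglyMeasurable.stronglyMeasurableAtFilter hx).const_add _

end Calculus

section Distributions

theorem cdf_gaussianReal_eq_integral (μ : ℝ) {v : ℝ≥0} (hv : v ≠ 0) (x : ℝ) :
    cdf (gaussianReal μ v) x = ∫ t in Iic x, gaussianPDFReal μ v t := by
  rw [cdf_eq_real, measureReal_def, gaussianReal_apply_eq_integral μ hv,
    ENNReal.toReal_ofReal
      (setIntegral_nonneg measurableSet_Iic fun t _ => gaussianPDFReal_nonneg μ v t)]

theorem hasDerivAt_cdf_gaussianReal (μ : ℝ) {v : ℝ≥0} (hv : v ≠ 0) (x : ℝ) :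
    HasDerivAt (cdf (gaussianReal μ v)) (gaussianPDFReal μ v x) x := by
  rw [show ⇑(cdf (gaussianReal μ v)) = _ from funext (cdf_gaussianReal_eq_integral μ hv)]
  exact hasDerivAt_integral_Iic (integrable_gaussianPDFReal μ v) (by
    rw [gaussianPDFReal_def]; fun_prop)

theorem integrable_gammaPDFReal {a r : ℝ} (ha : 0 < a) (hr : 0 < r) :
    Integrable (gammaPDFReal a r) := by
  have h := integrable_toReal_of_lintegral_ne_top
    (measurable_gammaPDFReal a r).ennreal_ofReal.aemeasurable
    ((lintegral_gammaPDF_eq_one ha hr).trans_ne ENNReal.one_ne_top)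
  simpa [ENNReal.toReal_ofReal (gammaPDFReal_nonneg ha hr _)] using h

theorem hasDerivAt_cdf_gammaMeasure {a r x : ℝ} (ha : 0 < a) (hr : 0 < r) (hx : 0 < x) :
    HasDerivAt (cdf (gammaMeasure a r)) (gammaPDFReal a r x) x := by
  rw [show ⇑(cdf (gammaMeasure a r)) = _ from funext (cdf_gammaMeasure_eq_integral ha hr)]
  refine hasDerivAt_integral_Iic (integrable_gammaPDFReal ha hr) ?_
  have hsmooth : ContinuousAt (fun t => r ^ a / Gamma a * t ^ (a - 1) * exp (-(r * t))) x := by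
    have := continuousAt_rpow_const x (a - 1) (Or.inl hx.ne')
    fun_prop
  refine hsmooth.congr ?_
  filter_upwards [Ioi_mem_nhds hx] with t ht
  rw [gammaPDFReal, if_pos (le_of_lt ht)]

theorem cdf_gammaMeasure_eq_integral_Ioc {a r : ℝ} (ha : 0 < a) (hr : 0 < r) (x : ℝ) :
    cdf (gammaMeasure a r) x = ∫ t in Ioc 0 x, gammaPDFReal a r t := by
  rw [cdf_gammaMeasure_eq_integral ha hr, ← integral_Icc_eq_integral_Ioc]
  refine setIntegral_eq_of_subset_of_forall_sdiff_eq_zero measurableSet_Iic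
    (fun t ht => ht.2) fun t ⟨htx, ht⟩ => ?_
  have : t < 0 := by
    by_contra! h
    exact ht ⟨h, htx⟩
  rw [gammaPDFReal, if_neg this.not_ge]

theorem tendsto_cdf_gammaMeasure_nhdsGT_zero {a r : ℝ} (ha : 0 < a) (hr : 0 < r) :
    Tendsto (cdf (gammaMeasure a r)) (𝓝[>] 0) (𝓝 0) := by
  have h := ((cdf (gammaMeasure a r)).right_continuous 0).mono Ioi_subset_Ici_self
  rwa [ContinuousWithinAt, cdf_gammaMeasure_eq_integral_Ioc ha hr, Ioc_self,
    Measure.restrict_empty, integral_zero_measure] at h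

end Distributions

namespace GammaDeviance

noncomputable def deviance (m s : ℝ) : ℝ := 2 * (s - m - m * log (s / m))

noncomputable def devianceRatio (m s : ℝ) : ℝ := (s - m) ^ 2 / deviance m s

variable {m s p : ℝ}

@[simp]
theorem deviance_self (m : ℝ) : deviance m m = 0 := by
  rcases eq_or_ne m 0 with rfl | hm <;> simp [deviance, *]

theorem hasDerivAt_deviance (hm : m ≠ 0) (hs : s ≠ 0) :
    HasDerivAt (deviance m) (2 * (s - m) / s) s := by
  have hlog : HasDerivAt (fun x => log (x / m)) (1 / m / (s / m)) s :=
    ((hasDerivAt_id' s).div_const m).log (div_ne_zero hs hm)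
  refine ((((hasDerivAt_id' s).sub_const m).sub (hlog.const_mul m)).const_mul 2).congr_deriv ?_
  field_simp

theorem deviance_pos (hm : 0 < m) (hs : 0 < s) (hsm : s ≠ m) : 0 < deviance m s := by
  have h := log_lt_sub_one_of_pos (div_pos hs hm) (by rwa [ne_eq, div_eq_one_iff_eq hm.ne'])
  have : m * log (s / m) < s - m := by
    calc m * log (s / m) < m * (s / m - 1) := by gcongr
      _ = s - m := by field_simp
  unfold deviance
  linarith

theorem deviance_nonneg (hm : 0 < m) (hs : 0 < s) : 0 ≤ deviance m s := by
  rcases eq_or_ne s m with rfl | hsm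
  · rw [deviance_self]
  · exact (deviance_pos hm hs hsm).le

theorem monotoneOn_sq_div_sub_deviance (hm : 0 < m) :
    MonotoneOn (fun s => (s - m) ^ 2 / m - deviance m s) (Ioi 0) := by
  have hderiv : ∀ x ∈ Ioi (0 : ℝ), HasDerivAt (fun s => (s - m) ^ 2 / m - deviance m s)
      (2 * (x - m) ^ 2 / (m * x)) x := fun x (hx : 0 < x) => by
    refine (((((hasDerivAt_id' x).sub_const m).pow 2).div_const m).sub
      (hasDerivAt_deviance hm.ne' hx.ne')).congr_deriv ?_
    field_simp
    ring
  refine monotoneOn_of_hasDerivAt_nonneg (convex_Ioi 0) hderiv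
    fun x (hx : 0 < x) => ?_
  positivity

theorem antitoneOn_sq_div_sub_deviance (hm : 0 < m) :
    AntitoneOn (fun s => (s - m) ^ 2 / s - deviance m s) (Ioi 0) := by
  have hderiv : ∀ x ∈ Ioi (0 : ℝ), HasDerivAt (fun s => (s - m) ^ 2 / s - deviance m s)
      (-((x - m) ^ 2 / x ^ 2)) x := fun x (hx : 0 < x) => by
    refine (((((hasDerivAt_id' x).sub_const m).pow 2).div (hasDerivAt_id' x) hx.ne').sub
      (hasDerivAt_deviance hm.ne' hx.ne')).congr_deriv ?_
    simp only [Pi.pow_apply]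
    field_simp
    ring
  exact antitoneOn_of_hasDerivAt_nonpos (convex_Ioi 0) hderiv
    fun x _ => neg_nonpos.2 (by positivity)

theorem devianceRatio_mem_Icc_of_lt (hm : 0 < m) (hs : 0 < s) (hsm : s < m) :
    devianceRatio m s ∈ Icc s m := by
  have hpos := deviance_pos hm hs hsm.ne
  have hle : (s - m) ^ 2 / m - deviance m s ≤ 0 := by
    simpa using monotoneOn_sq_div_sub_deviance hm hs hm hsm.le
  have hge : 0 ≤ (s - m) ^ 2 / s - deviance m s := by
    simpa using antitoneOn_sq_div_sub_deviance hm hs hm hsm.le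
  rw [sub_nonpos, div_le_iff₀ hm] at hle
  rw [sub_nonneg, le_div_iff₀ hs] at hge
  rw [mem_Icc, devianceRatio, le_div_iff₀ hpos, div_le_iff₀ hpos]
  constructor <;> linarith

theorem devianceRatio_mem_Icc_of_gt (hm : 0 < m) (hsm : m < s) :
    devianceRatio m s ∈ Icc m s := by
  have hs : 0 < s := hm.trans hsm
  have hpos := deviance_pos hm hs hsm.ne'
  have hge : 0 ≤ (s - m) ^ 2 / m - deviance m s := by
    simpa using monotoneOn_sq_div_sub_deviance hm hm hs hsm.le
  have hle : (s - m) ^ 2 / s - deviance m s ≤ 0 := by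
    simpa using antitoneOn_sq_div_sub_deviance hm hm hs hsm.le
  rw [sub_nonneg, le_div_iff₀ hm] at hge
  rw [sub_nonpos, div_le_iff₀ hs] at hle
  rw [mem_Icc, devianceRatio, le_div_iff₀ hpos, div_le_iff₀ hpos]
  constructor <;> linarith

theorem hasDerivAt_devianceRatio (hm : 0 < m) (hs : 0 < s) (hsm : s ≠ m) :
    HasDerivAt (devianceRatio m)
      (2 * (s - m) * (s - devianceRatio m s) / (s * deviance m s)) s := by
  have hpos := deviance_pos hm hs hsm
  refine ((((hasDerivAt_id' s).sub_const m).pow 2).div (hasDerivAt_deviance hm.ne' hs.ne')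
    hpos.ne').congr_deriv ?_
  unfold devianceRatio
  simp only [Pi.pow_apply]
  field_simp
  ring

theorem monotoneOn_devianceRatio (hm : 0 < m) : MonotoneOn (devianceRatio m) (Ioi 0 \ {m}) := by
  have hderiv_nonneg : ∀ x, 0 < x → x ≠ m →
      0 ≤ 2 * (x - m) * (x - devianceRatio m x) / (x * deviance m x) := by
    intro x hx hxm
    have hpos := deviance_pos hm hx hxm
    rcases hxm.lt_or_gt with hlt | hgt
    · have := (devianceRatio_mem_Icc_of_lt hm hx hlt).1
      exact div_nonneg (mul_nonneg_of_nonpos_of_nonpos (by linarith) (by linarith)) (by positivity)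
    · have := (devianceRatio_mem_Icc_of_gt hm hgt).2
      exact div_nonneg (mul_nonneg (by linarith) (by linarith)) (by positivity)
  have left : MonotoneOn (devianceRatio m) (Ioo 0 m) :=
    monotoneOn_of_hasDerivAt_nonneg (convex_Ioo 0 m)
      (fun x hx => hasDerivAt_devianceRatio hm hx.1 hx.2.ne)
      (fun x hx => hderiv_nonneg x hx.1 hx.2.ne)
  have right : MonotoneOn (devianceRatio m) (Ioi m) :=
    monotoneOn_of_hasDerivAt_nonneg (convex_Ioi m)
      (fun x hx => hasDerivAt_devianceRatio hm (hm.trans hx) (ne_of_gt hx))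
      (fun x hx => hderiv_nonneg x (hm.trans hx) (ne_of_gt hx))
  rintro x ⟨hx, hxm⟩ y ⟨hy, hym⟩ hxy
  rcases (Ne.lt_or_gt hxm), (Ne.lt_or_gt hym) with ⟨hxm | hxm, hym | hym⟩
  · exact left ⟨hx, hxm⟩ ⟨hy, hym⟩ hxy
  · exact (devianceRatio_mem_Icc_of_lt hm hx hxm).2.trans (devianceRatio_mem_Icc_of_gt hm hym).1
  · exact absurd (hxm.trans_le hxy) hym.not_gt
  · exact right hxm hym hxy

theorem tendsto_deviance_nhdsGT_zero (hm : 0 < m) : Tendsto (deviance m) (𝓝[>] 0) atTop := by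
  have hlog : Tendsto (fun s => -(2 * m) * log s + (2 * m * log m - 2 * m)) (𝓝[>] 0) atTop :=
    tendsto_atTop_add_const_right _ _
      (tendsto_log_nhdsGT_zero.const_mul_atBot_of_neg (by linarith))
  refine tendsto_atTop_mono' _ ?_ hlog
  filter_upwards [self_mem_nhdsWithin] with s (hs : 0 < s)
  rw [deviance, log_div hs.ne' hm.ne']
  linarith

theorem sub_mul_log_two_le_deviance (hm : 0 < m) (hs : 0 < s) :
    s - 2 * m * log 2 ≤ deviance m s := by
  have h := log_le_sub_one_of_pos (show 0 < s / (2 * m) by positivity)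
  have hsplit : log (s / m) = log (s / (2 * m)) + log 2 := by
    rw [← log_mul (by positivity) two_ne_zero]
    congr 1
    field_simp
  have : m * log (s / (2 * m)) ≤ s / 2 - m := by
    calc m * log (s / (2 * m)) ≤ m * (s / (2 * m) - 1) := by gcongr
      _ = s / 2 - m := by field_simp
  rw [deviance, hsplit]
  nlinarith

theorem tendsto_deviance_atTop (hm : 0 < m) : Tendsto (deviance m) atTop atTop := by
  refine tendsto_atTop_mono' _ ?_ (tendsto_atTop_add_const_right _ (-(2 * m * log 2)) tendsto_id)
  filter_upwards [eventually_gt_atTop 0] with s hs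
  exact sub_mul_log_two_le_deviance hm hs

noncomputable def signedRoot (m s : ℝ) : ℝ :=
  if s < m then -√(deviance m s) else √(deviance m s)

theorem signedRoot_of_lt (h : s < m) : signedRoot m s = -√(deviance m s) := if_pos h

theorem signedRoot_of_ge (h : m ≤ s) : signedRoot m s = √(deviance m s) := if_neg h.not_gt

@[simp]
theorem signedRoot_self (m : ℝ) : signedRoot m m = 0 := by
  simp [signedRoot_of_ge le_rfl]

theorem abs_signedRoot (m s : ℝ) : |signedRoot m s| = √(deviance m s) := by
  unfold signedRoot
  split_ifs <;> simp

theorem signedRoot_sq (hm : 0 < m) (hs : 0 < s) : signedRoot m s ^ 2 = deviance m s := by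
  rw [← sq_abs, abs_signedRoot, sq_sqrt (deviance_nonneg hm hs)]

theorem sub_div_signedRoot (m s : ℝ) : (s - m) / signedRoot m s = √(devianceRatio m s) := by
  rw [devianceRatio, sqrt_div (sq_nonneg _), sqrt_sq_eq_abs]
  rcases lt_or_ge s m with h | h
  · rw [signedRoot_of_lt h, abs_of_neg (sub_neg.2 h), div_neg, neg_div]
  · rw [signedRoot_of_ge h, abs_of_nonneg (sub_nonneg.2 h)]

theorem devianceRatio_pos (hm : 0 < m) (hs : 0 < s) (hsm : s ≠ m) : 0 < devianceRatio m s :=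
  div_pos (sq_pos_of_ne_zero (sub_ne_zero.2 hsm)) (deviance_pos hm hs hsm)

theorem hasDerivAt_signedRoot (hm : 0 < m) (hs : 0 < s) (hsm : s ≠ m) :
    HasDerivAt (signedRoot m) (√(devianceRatio m s) / s) s := by
  have hpos := deviance_pos hm hs hsm
  have hsqrt := (hasDerivAt_deviance hm.ne' hs.ne').sqrt hpos.ne'
  have hroot : 0 < √(deviance m s) := sqrt_pos.2 hpos
  rw [← sub_div_signedRoot]
  rcases hsm.lt_or_gt with h | h
  · refine (hsqrt.neg.congr_of_eventuallyEq ?_).congr_deriv ?_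
    · filter_upwards [eventually_lt_nhds h] with x hx
      exact signedRoot_of_lt hx
    · rw [signedRoot_of_lt h]
      field_simp
  · refine (hsqrt.congr_of_eventuallyEq ?_).congr_deriv ?_
    · filter_upwards [eventually_gt_nhds h] with x hx
      exact signedRoot_of_ge hx.le
    · rw [signedRoot_of_ge h.le]
      field_simp

theorem continuousAt_signedRoot (hm : 0 < m) (hs : 0 < s) : ContinuousAt (signedRoot m) s := by
  rcases eq_or_ne s m with rfl | hsm
  · have hdev := ((hasDerivAt_deviance hm.ne' hm.ne').continuousAt).sqrt
    rw [ContinuousAt, deviance_self, sqrt_zero] at hdev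
    rw [ContinuousAt, signedRoot_self, tendsto_zero_iff_abs_tendsto_zero]
    simpa only [Function.comp_def, abs_signedRoot] using hdev
  · exact (hasDerivAt_signedRoot hm hs hsm).continuousAt

theorem strictMonoOn_signedRoot (hm : 0 < m) : StrictMonoOn (signedRoot m) (Ioi 0) := by
  refine strictMonoOn_of_hasDerivAt_pos_of_ne (c := m) (convex_Ioi 0)
    (fun x hx => (continuousAt_signedRoot hm hx).continuousWithinAt)
    (fun x hx hxm => hasDerivAt_signedRoot hm (interior_subset hx) hxm) fun x hx hxm => ?_
  rw [interior_Ioi] at hx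
  exact div_pos (sqrt_pos.2 (devianceRatio_pos hm hx hxm)) hx

theorem tendsto_signedRoot_nhdsGT_zero (hm : 0 < m) :
    Tendsto (signedRoot m) (𝓝[>] 0) atBot := by
  refine (tendsto_neg_atTop_atBot.comp
    (tendsto_sqrt_atTop.comp (tendsto_deviance_nhdsGT_zero hm))).congr' ?_
  filter_upwards [eventually_nhdsWithin_of_eventually_nhds (eventually_lt_nhds hm)] with s hs
  exact (signedRoot_of_lt hs).symm

theorem tendsto_signedRoot_atTop (hm : 0 < m) : Tendsto (signedRoot m) atTop atTop := by
  refine (tendsto_sqrt_atTop.comp (tendsto_deviance_atTop hm)).congr' ?_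
  filter_upwards [eventually_ge_atTop m] with s hs
  exact (signedRoot_of_ge hs).symm

theorem exists_signedRoot_eq (hm : 0 < m) (w : ℝ) : ∃ s, 0 < s ∧ signedRoot m s = w := by
  obtain ⟨a, ha, (ha₀ : 0 < a)⟩ :=
    ((tendsto_signedRoot_nhdsGT_zero hm).eventually_le_atBot w |>.and self_mem_nhdsWithin).exists
  obtain ⟨b, hb, hab⟩ :=
    ((tendsto_signedRoot_atTop hm).eventually_ge_atTop w |>.and (eventually_ge_atTop a)).exists
  obtain ⟨s, hs, rfl⟩ := intermediate_value_Icc hab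
    (fun x hx => (continuousAt_signedRoot hm (ha₀.trans_le hx.1)).continuousWithinAt) ⟨ha, hb⟩
  exact ⟨s, ha₀.trans_le hs.1, rfl⟩

noncomputable def densityRatio (m : ℝ) : ℝ := √(2 * π) * m ^ m * exp (-m) / Gamma m

theorem mul_gammaPDFReal_eq (hm : 0 < m) (hs : 0 < s) :
    s * gammaPDFReal m 1 s = densityRatio m * gaussianPDFReal 0 1 (signedRoot m s) := by
  have hexp : exp (-(signedRoot m s - 0) ^ 2 / (2 * ((1 : ℝ≥0) : ℝ))) =
      exp (m - s) * (s / m) ^ m := by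
    rw [sub_zero, signedRoot_sq hm hs, NNReal.coe_one, deviance,
      rpow_def_of_pos (div_pos hs hm), ← exp_add]
    congr 1
    ring
  rw [gaussianPDFReal, hexp, gammaPDFReal, if_pos hs.le, densityRatio, div_rpow hs.le hm.le,
    rpow_sub_one hs.ne', exp_sub, NNReal.coe_one, mul_one, one_rpow, one_mul, exp_neg, exp_neg]
  have := (Gamma_pos_of_pos hm).ne'
  have := (rpow_pos_of_pos hm m).ne'
  have : 0 < √(2 * π) := by positivity
  field_simp

noncomputable def cdfGap (m s : ℝ) : ℝ :=
  cdf (gammaMeasure m 1) s - cdf (gaussianReal 0 1) (signedRoot m s)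

theorem hasDerivAt_cdfGap (hm : 0 < m) (hs : 0 < s) (hsm : s ≠ m) :
    HasDerivAt (cdfGap m)
      (gaussianPDFReal 0 1 (signedRoot m s) / s * (densityRatio m - √(devianceRatio m s))) s := by
  refine ((hasDerivAt_cdf_gammaMeasure hm one_pos hs).sub
    ((hasDerivAt_cdf_gaussianReal 0 one_ne_zero _).comp s
      (hasDerivAt_signedRoot hm hs hsm))).congr_deriv ?_
  have key := mul_gammaPDFReal_eq hm hs
  field_simp
  linear_combination key

theorem continuousAt_cdfGap (hm : 0 < m) (hs : 0 < s) : ContinuousAt (cdfGap m) s :=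
  (hasDerivAt_cdf_gammaMeasure hm one_pos hs).continuousAt.sub
    ((hasDerivAt_cdf_gaussianReal 0 one_ne_zero _).continuousAt.comp
      (continuousAt_signedRoot hm hs))

theorem tendsto_cdfGap_nhdsGT_zero (hm : 0 < m) : Tendsto (cdfGap m) (𝓝[>] 0) (𝓝 0) := by
  have h := (tendsto_cdf_gammaMeasure_nhdsGT_zero hm one_pos).sub
    ((tendsto_cdf_atBot (gaussianReal 0 1)).comp (tendsto_signedRoot_nhdsGT_zero hm))
  rwa [sub_zero] at h

theorem tendsto_cdfGap_atTop (hm : 0 < m) : Tendsto (cdfGap m) atTop (𝓝 0) := by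
  have h := (tendsto_cdf_atTop (gammaMeasure m 1)).sub
    ((tendsto_cdf_atTop (gaussianReal 0 1)).comp (tendsto_signedRoot_atTop hm))
  rwa [sub_self] at h

theorem cdfGap_nonneg (hm : 0 < m) (hp : 0 < p) : 0 ≤ cdfGap m p := by
  refine nonneg_of_monotoneOn_or_antitoneOn hp (tendsto_cdfGap_nhdsGT_zero hm)
    (tendsto_cdfGap_atTop hm) ?_
  have hcont : ContinuousOn (cdfGap m) (Ioi 0) := fun x hx =>
    (continuousAt_cdfGap hm hx).continuousWithinAt
  have hfactor : ∀ x, 0 < x → 0 ≤ gaussianPDFReal 0 1 (signedRoot m x) / x := fun x hx =>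
    div_nonneg (gaussianPDFReal_nonneg _ _ _) hx.le
  by_cases hbelow : ∀ s ∈ Ioo 0 p, s ≠ m → √(devianceRatio m s) ≤ densityRatio m
  · refine .inl <| monotoneOn_of_hasDerivAt_nonneg_of_ne (c := m) (convex_Ioc 0 p)
      (hcont.mono Ioc_subset_Ioi_self)
      (fun x hx hxm => hasDerivAt_cdfGap hm (interior_subset hx).1 hxm) fun x hx hxm => ?_
    rw [interior_Ioc] at hx
    exact mul_nonneg (hfactor x hx.1) (sub_nonneg.2 (hbelow x hx hxm))
  · push Not at hbelow
    obtain ⟨s, ⟨hs, hsp⟩, hsm, hlt⟩ := hbelow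
    refine .inr <| antitoneOn_of_hasDerivAt_nonpos_of_ne (c := m) (convex_Ici p)
      (hcont.mono (Ici_subset_Ioi.2 hp))
      (fun x hx hxm => hasDerivAt_cdfGap hm (hp.trans_le (interior_subset hx)) hxm)
      fun x hx hxm => ?_
    rw [interior_Ici] at hx
    refine mul_nonpos_of_nonneg_of_nonpos (hfactor x (hp.trans hx)) (sub_nonpos.2 ?_)
    exact hlt.le.trans <| sqrt_le_sqrt <| monotoneOn_devianceRatio hm ⟨hs, hsm⟩
      ⟨hp.trans hx, hxm⟩ (hsp.trans hx).le

end GammaDeviance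

open GammaDeviance

/-- The G-transform of a `Γ(m,1)`-distributed random variable is stochastically less than a
standard Gaussian: `P(Z ≤ w) ≤ P(G(T) ≤ w)` for all real `w`. -/
theorem G_transform_gamma_le_gaussian (m : ℝ) (hm : 0 < m) (G : ℝ → ℝ)
    (hG : G = fun s : ℝ =>
      if s < m then -Real.sqrt (2 * (s - m - m * Real.log (s / m)))
      else Real.sqrt (2 * (s - m - m * Real.log (s / m))))
    (g : ℝ → ℝ) (hg : g = fun s : ℝ => s ^ (m - 1) * Real.exp (-s) / Real.Gamma m) :
    ∀ w : ℝ,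
      (∫ z in Set.Iic w, Real.exp (-z ^ 2 / 2) / Real.sqrt (2 * Real.pi))
        ≤ ∫ s in {s : ℝ | 0 < s ∧ G s ≤ w}, g s := by
  intro w
  obtain ⟨s, hs, rfl⟩ := exists_signedRoot_eq hm w
  have hsublevel : {x | 0 < x ∧ G x ≤ signedRoot m s} = Ioc 0 s := by
    ext x
    refine and_congr_right fun hx => ?_
    rw [hG]
    exact (strictMonoOn_signedRoot hm).le_iff_le hx hs
  calc (∫ z in Iic (signedRoot m s), exp (-z ^ 2 / 2) / √(2 * π))
      = cdf (gaussianReal 0 1) (signedRoot m s) := by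
        rw [cdf_gaussianReal_eq_integral 0 one_ne_zero]
        refine setIntegral_congr_fun measurableSet_Iic fun z _ => ?_
        simp [gaussianPDFReal, div_eq_inv_mul]
    _ ≤ cdf (gammaMeasure m 1) s := sub_nonneg.1 (cdfGap_nonneg hm hs)
    _ = ∫ x in {x | 0 < x ∧ G x ≤ signedRoot m s}, g x := by
        rw [cdf_gammaMeasure_eq_integral_Ioc hm one_pos, hsublevel, hg]
        refine setIntegral_congr_fun measurableSet_Ioc fun x hx => ?_
        rw [gammaPDFReal, if_pos hx.1.le, one_rpow, one_mul]
        ring
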